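/- arXiv:1701.06640 — 5 statements merged into one kernel-verified Lean document; each statement's English description precedes it below -/
import Mathlib

section
/- For positive integers k1 < k2, the supremum of the set Δ0 = { 2/2^{a1} - 2/2^{a1+a2} + 2/2^{a1+a2+a3} - ... : each a_i ∈ {k1, k2} } equals 2(2^{k2} - 1)/(2^{k1+k2} - 1), attained by the alternating sequence a1=k1, a2=k2, a3=k1, .... -/
open Filter Topology

/-- Partial sum `a 0 + ... + a n` of a digit sequence. -/
noncomputable def psum (a : ℕ → ℕ) (n : ℕ) : ℕ := ∑ i ∈ Finset.range (n + 1), a i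

/-- Value of the alternating series `Σ_{n≥1} 2(-1)^{n-1}/2^{a1+...+an}`. -/
noncomputable def val (a : ℕ → ℕ) : ℝ := ∑' n : ℕ, (2 * (-1 : ℝ) ^ n) / 2 ^ (psum a n)

/-- The set `Δ0` of all values of the alternating series over `K`-valued digit sequences. -/
noncomputable def Delta0 (K : Set ℕ) : Set ℝ :=
  { y | ∃ a : ℕ → ℕ, (∀ i, a i ∈ K) ∧ y = val a }

lemma psum_zero (a : ℕ → ℕ) : psum a 0 = a 0 := by simp [psum]

lemma psum_succ_shift (a : ℕ → ℕ) (n : ℕ) :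
    psum a (n + 1) = a 0 + psum (fun i => a (i + 1)) n := by
  have := Finset.sum_range_succ' a (n + 1)
  simp only [psum]
  omega

lemma psum_mono (a : ℕ → ℕ) : Monotone (psum a) := by
  intro m n h
  exact Finset.sum_le_sum_of_subset (Finset.range_subset_range.2 (by omega))

lemma psum_lb (a : ℕ → ℕ) (h : ∀ i, 1 ≤ a i) (n : ℕ) : n + 1 ≤ psum a n := by
  calc n + 1 = ∑ _i ∈ Finset.range (n + 1), 1 := by simp
  _ ≤ psum a n := Finset.sum_le_sum fun i _ => h i

lemma summable_term (a : ℕ → ℕ) (h : ∀ i, 1 ≤ a i) :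
    Summable (fun n : ℕ => (2 * (-1 : ℝ) ^ n) / 2 ^ (psum a n)) := by
  apply Summable.of_norm
  apply Summable.of_nonneg_of_le (fun n => norm_nonneg _) (fun n => ?_)
    summable_geometric_two
  have h1 : ‖(2 * (-1 : ℝ) ^ n) / 2 ^ (psum a n)‖ = 2 / 2 ^ (psum a n) := by
    rw [norm_div, norm_mul]
    simp [abs_of_nonneg]
  rw [h1]
  have h2 : (1 / 2 : ℝ) ^ n = 2 / 2 ^ (n + 1) := by
    rw [div_pow, one_pow, pow_succ]
    rw [div_eq_div_iff (by positivity) (by positivity)]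
    ring
  rw [h2]
  exact div_le_div_of_nonneg_left (by norm_num) (by positivity)
    (pow_le_pow_right₀ one_le_two (psum_lb a h n))

lemma val_nonneg (a : ℕ → ℕ) (h : ∀ i, 1 ≤ a i) : 0 ≤ val a := by
  have hs : Summable (fun n : ℕ => (2 * (-1 : ℝ) ^ n) / 2 ^ (psum a n)) := summable_term a h
  have he : Summable fun k : ℕ => (2 * (-1 : ℝ) ^ (2 * k)) / 2 ^ (psum a (2 * k)) :=
    hs.comp_injective (i := fun k : ℕ => 2 * k) (fun x y hxy => by dsimp only at hxy; omega)
  have ho : Summable fun k : ℕ => (2 * (-1 : ℝ) ^ (2 * k + 1)) / 2 ^ (psum a (2 * k + 1)) :=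
    hs.comp_injective (i := fun k : ℕ => 2 * k + 1) (fun x y hxy => by dsimp only at hxy; omega)
  have hkey := tsum_even_add_odd
    (f := fun n : ℕ => (2 * (-1 : ℝ) ^ n) / 2 ^ (psum a n)) he ho
  rw [val, ← hkey, ← Summable.tsum_add he ho]
  apply tsum_nonneg
  intro k
  have h1 : (2 * (-1 : ℝ) ^ (2 * k)) / 2 ^ (psum a (2 * k)) = 2 / 2 ^ (psum a (2 * k)) := by
    rw [pow_mul]; norm_num
  have h2 : (2 * (-1 : ℝ) ^ (2 * k + 1)) / 2 ^ (psum a (2 * k + 1)) =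
      -(2 / 2 ^ (psum a (2 * k + 1))) := by
    rw [pow_succ, pow_mul]; norm_num [neg_div]
  rw [h1, h2]
  have hle : (2:ℝ) / 2 ^ (psum a (2 * k + 1)) ≤ 2 / 2 ^ (psum a (2 * k)) :=
    div_le_div_of_nonneg_left (by norm_num) (by positivity)
      (pow_le_pow_right₀ one_le_two (psum_mono a (by omega)))
  linarith

lemma val_rec (a : ℕ → ℕ) (h : ∀ i, 1 ≤ a i) :
    val a = (2 - val (fun n => a (n + 1))) / 2 ^ (a 0) := by
  have hs' : Summable (fun n : ℕ =>
      (2 * (-1 : ℝ) ^ n) / 2 ^ (psum (fun i => a (i + 1)) n)) :=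
    summable_term _ (fun i => h (i + 1))
  have h20 : (2:ℝ) ^ (a 0) ≠ 0 := by positivity
  have key : ∀ n : ℕ, (2 * (-1 : ℝ) ^ (n + 1)) / 2 ^ (psum a (n + 1)) =
      (-(1 / 2 ^ (a 0))) * ((2 * (-1 : ℝ) ^ n) / 2 ^ (psum (fun i => a (i + 1)) n)) := by
    intro n
    rw [psum_succ_shift a n, pow_add, pow_succ]
    have hx : (2:ℝ) ^ (psum (fun i => a (i + 1)) n) ≠ 0 := by positivity
    field_simp
    ring
  have hshift : Summable (fun n : ℕ => (2 * (-1 : ℝ) ^ (n + 1)) / 2 ^ (psum a (n + 1))) := by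
    rw [show (fun n : ℕ => (2 * (-1 : ℝ) ^ (n + 1)) / 2 ^ (psum a (n + 1))) =
        (fun n : ℕ => (-(1 / 2 ^ (a 0))) *
          ((2 * (-1 : ℝ) ^ n) / 2 ^ (psum (fun i => a (i + 1)) n))) from funext key]
    exact hs'.mul_left _
  rw [val, tsum_eq_zero_add' (f := fun n : ℕ => (2 * (-1 : ℝ) ^ n) / 2 ^ (psum a n)) hshift]
  have hrest : ∑' n : ℕ, (2 * (-1 : ℝ) ^ (n + 1)) / 2 ^ (psum a (n + 1)) =
      (-(1 / 2 ^ (a 0))) * val (fun n => a (n + 1)) := by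
    rw [val, ← tsum_mul_left]
    exact tsum_congr key
  rw [hrest, psum_zero]
  field_simp
  ring

lemma val_le_one (a : ℕ → ℕ) (h : ∀ i, 1 ≤ a i) : val a ≤ 1 := by
  rw [val_rec a h]
  have h0 : 0 ≤ val (fun n => a (n + 1)) := val_nonneg _ (fun i => h (i + 1))
  have h2 : (2:ℝ) ≤ 2 ^ (a 0) := by
    calc (2:ℝ) = 2 ^ 1 := (pow_one 2).symm
    _ ≤ 2 ^ (a 0) := pow_le_pow_right₀ one_le_two (h 0)
  rw [div_le_one (by positivity)]
  linarith

theorem sup_Delta0 (k1 k2 : ℕ) (hk1 : 0 < k1) (hk : k1 < k2) :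
    IsGreatest (Delta0 {k1, k2}) (2 * ((2 : ℝ) ^ k2 - 1) / ((2 : ℝ) ^ (k1 + k2) - 1)) ∧
    val (fun n => if n % 2 = 0 then k1 else k2) =
      2 * ((2 : ℝ) ^ k2 - 1) / ((2 : ℝ) ^ (k1 + k2) - 1) := by
  have hA2 : (2:ℝ) ≤ 2 ^ k1 := by
    calc (2:ℝ) = 2 ^ 1 := (pow_one 2).symm
    _ ≤ 2 ^ k1 := pow_le_pow_right₀ one_le_two hk1
  have hB2 : (2:ℝ) ≤ 2 ^ k2 := by
    calc (2:ℝ) = 2 ^ 1 := (pow_one 2).symm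
    _ ≤ 2 ^ k2 := pow_le_pow_right₀ one_le_two (by omega)
  have hApos : (0:ℝ) < 2 ^ k1 := by positivity
  have hBpos : (0:ℝ) < 2 ^ k2 := by positivity
  have hABpow : (2:ℝ) ^ (k1 + k2) = 2 ^ k1 * 2 ^ k2 := pow_add 2 k1 k2
  have hABpos : (0:ℝ) < 2 ^ k1 * 2 ^ k2 - 1 := by nlinarith
  have hb1 : ∀ i, 1 ≤ (fun n => if n % 2 = 0 then k1 else k2) i := by
    intro i; dsimp only; split <;> omega
  have hc1 : ∀ i, 1 ≤ (fun n => if n % 2 = 0 then k2 else k1) i := by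
    intro i; dsimp only; split <;> omega
  have hbs : (fun n => (fun m => if m % 2 = 0 then k1 else k2) (n + 1)) =
      (fun n => if n % 2 = 0 then k2 else k1) := by
    funext n
    rcases Nat.mod_two_eq_zero_or_one n with h | h <;>
      simp [Nat.add_mod, h]
  have hcs : (fun n => (fun m => if m % 2 = 0 then k2 else k1) (n + 1)) =
      (fun n => if n % 2 = 0 then k1 else k2) := by
    funext n
    rcases Nat.mod_two_eq_zero_or_one n with h | h <;>
      simp [Nat.add_mod, h]
  have hrecb : val (fun n => if n % 2 = 0 then k1 else k2) =
      (2 - val (fun n => if n % 2 = 0 then k2 else k1)) / 2 ^ k1 := by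
    have h := val_rec (fun n => if n % 2 = 0 then k1 else k2) hb1
    rw [hbs] at h
    simpa using h
  have hrecc : val (fun n => if n % 2 = 0 then k2 else k1) =
      (2 - val (fun n => if n % 2 = 0 then k1 else k2)) / 2 ^ k2 := by
    have h := val_rec (fun n => if n % 2 = 0 then k2 else k1) hc1
    rw [hcs] at h
    simpa using h
  -- value of the alternating sequence
  have hvalb : val (fun n => if n % 2 = 0 then k1 else k2) =
      2 * ((2:ℝ) ^ k2 - 1) / (2 ^ k1 * 2 ^ k2 - 1) := by
    rw [hrecc] at hrecb
    rw [eq_div_iff (ne_of_gt hApos)] at hrecb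
    rw [eq_div_iff (ne_of_gt hABpos)]
    have e2 : (val fun n => if n % 2 = 0 then k1 else k2) * 2 ^ k1 * 2 ^ k2 =
        (2 - (2 - val fun n => if n % 2 = 0 then k1 else k2) / 2 ^ k2) * 2 ^ k2 := by
      rw [hrecb]
    have e3 : (2 - (2 - val fun n => if n % 2 = 0 then k1 else k2) / 2 ^ k2) * 2 ^ k2 =
        2 * 2 ^ k2 - (2 - val fun n => if n % 2 = 0 then k1 else k2) := by
      rw [sub_mul, div_mul_cancel₀ _ (ne_of_gt hBpos)]
    linear_combination e2.trans e3
  have hbmem : ∀ i, (fun n => if n % 2 = 0 then k1 else k2) i ∈ ({k1, k2} : Set ℕ) := by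
    intro i; dsimp only; split
    · exact Or.inl rfl
    · exact Or.inr rfl
  have hMmem : 2 * ((2:ℝ) ^ k2 - 1) / (2 ^ k1 * 2 ^ k2 - 1) ∈ Delta0 {k1, k2} :=
    ⟨_, hbmem, hvalb.symm⟩
  have hne : (Delta0 ({k1, k2} : Set ℕ)).Nonempty := ⟨_, hMmem⟩
  have hdig : ∀ a : ℕ → ℕ, (∀ i, a i ∈ ({k1, k2} : Set ℕ)) → ∀ i, 1 ≤ a i := by
    intro a ha i
    rcases ha i with h | h
    · omega
    · rw [Set.mem_singleton_iff] at h; omega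
  have hbddA : BddAbove (Delta0 ({k1, k2} : Set ℕ)) := by
    refine ⟨1, ?_⟩
    rintro y ⟨a, ha, rfl⟩
    exact val_le_one a (hdig a ha)
  have hbddB : BddBelow (Delta0 ({k1, k2} : Set ℕ)) := by
    refine ⟨0, ?_⟩
    rintro y ⟨a, ha, rfl⟩
    exact val_nonneg a (hdig a ha)
  set U : ℝ := sSup (Delta0 ({k1, k2} : Set ℕ)) with hU
  set L : ℝ := sInf (Delta0 ({k1, k2} : Set ℕ)) with hL
  have hU1 : U ≤ 1 := csSup_le hne (by rintro y ⟨a, ha, rfl⟩; exact val_le_one a (hdig a ha))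
  have hL0 : 0 ≤ L := le_csInf hne (by rintro y ⟨a, ha, rfl⟩; exact val_nonneg a (hdig a ha))
  have hshiftmem : ∀ a : ℕ → ℕ, (∀ i, a i ∈ ({k1, k2} : Set ℕ)) →
      val (fun n => a (n + 1)) ∈ Delta0 ({k1, k2} : Set ℕ) :=
    fun a ha => ⟨_, fun i => ha (i + 1), rfl⟩
  have hUb : U ≤ (2 - L) / 2 ^ k1 := by
    apply csSup_le hne
    rintro y ⟨a, ha, rfl⟩
    have h1 := hdig a ha
    rw [val_rec a h1]
    have hLle : L ≤ val (fun n => a (n + 1)) := csInf_le hbddB (hshiftmem a ha)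
    have hvle : val (fun n => a (n + 1)) ≤ 1 := val_le_one _ (fun i => h1 (i + 1))
    have haA : (2:ℝ) ^ k1 ≤ 2 ^ (a 0) := by
      rcases ha 0 with h | h
      · rw [h]
      · rw [Set.mem_singleton_iff] at h; rw [h]
        exact pow_le_pow_right₀ one_le_two (le_of_lt hk)
    calc (2 - val (fun n => a (n + 1))) / 2 ^ (a 0)
        ≤ (2 - L) / 2 ^ (a 0) :=
          div_le_div_of_nonneg_right (by linarith) (by positivity)
      _ ≤ (2 - L) / 2 ^ k1 :=
          div_le_div_of_nonneg_left (by linarith) hApos haA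
  have hLb : (2 - U) / 2 ^ k2 ≤ L := by
    apply le_csInf hne
    rintro y ⟨a, ha, rfl⟩
    have h1 := hdig a ha
    rw [val_rec a h1]
    have hUge : val (fun n => a (n + 1)) ≤ U := le_csSup hbddA (hshiftmem a ha)
    have hv0 : 0 ≤ val (fun n => a (n + 1)) := val_nonneg _ (fun i => h1 (i + 1))
    have haB : (2:ℝ) ^ (a 0) ≤ 2 ^ k2 := by
      rcases ha 0 with h | h
      · rw [h]
        exact pow_le_pow_right₀ one_le_two (le_of_lt hk)
      · rw [Set.mem_singleton_iff] at h; rw [h]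
    have hpos : (0:ℝ) < 2 ^ (a 0) := by positivity
    calc (2 - U) / 2 ^ k2
        ≤ (2 - val (fun n => a (n + 1))) / 2 ^ k2 :=
          div_le_div_of_nonneg_right (by linarith) hBpos.le
      _ ≤ (2 - val (fun n => a (n + 1))) / 2 ^ (a 0) :=
          div_le_div_of_nonneg_left (by linarith) hpos haB
  have hUM : U ≤ 2 * ((2:ℝ) ^ k2 - 1) / (2 ^ k1 * 2 ^ k2 - 1) := by
    have h1 : U * 2 ^ k1 ≤ 2 - L := (le_div_iff₀ hApos).1 hUb
    have h2 : 2 - U ≤ L * 2 ^ k2 := by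
      rw [div_le_iff₀ hBpos] at hLb; exact hLb
    rw [le_div_iff₀ hABpos]
    nlinarith [mul_le_mul_of_nonneg_right h1 hBpos.le]
  refine ⟨⟨?_, ?_⟩, ?_⟩
  · rw [hABpow]; exact hMmem
  · rintro y hy
    have : y ≤ U := le_csSup hbddA hy
    rw [hABpow]
    linarith
  · rw [hABpow]; exact hvalb
end

section
/- For positive integers k1 < k2, the diameter of the set Δ0 = { Σ_{n≥1} 2(-1)^{n-1}/2^{a1+...+an} : a_i ∈ {k1, k2} } equals 2(2^{k2} - 2^{k1})/(2^{k1+k2} - 1). -/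
open Filter Topology

section Series

variable {a : ℕ → ℕ}

lemma le_psum (ha : ∀ i, 1 ≤ a i) (n : ℕ) : n + 1 ≤ psum a n :=
  calc n + 1 = ∑ _ ∈ Finset.range (n + 1), 1 := by simp
    _ ≤ psum a n := Finset.sum_le_sum fun i _ => ha i

lemma psum_succ (a : ℕ → ℕ) (n : ℕ) : psum a (n + 1) = a 0 + psum (fun m => a (m + 1)) n := by
  rw [psum, Finset.sum_range_succ', add_comm, psum]

lemma norm_val_term_le (ha : ∀ i, 1 ≤ a i) (n : ℕ) :
    ‖2 * (-1 : ℝ) ^ n / 2 ^ psum a n‖ ≤ (1 / 2) ^ n := by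
  have hpow : (2 : ℝ) ^ (n + 1) ≤ 2 ^ psum a n := pow_le_pow_right₀ one_le_two (le_psum ha n)
  calc ‖2 * (-1 : ℝ) ^ n / 2 ^ psum a n‖ = 2 / 2 ^ psum a n := by simp
    _ ≤ 2 / 2 ^ (n + 1) := div_le_div_of_nonneg_left zero_le_two (by positivity) hpow
    _ = (1 / 2) ^ n := by rw [pow_succ, one_div_pow]; field_simp

lemma summable_val_term (ha : ∀ i, 1 ≤ a i) :
    Summable fun n => 2 * (-1 : ℝ) ^ n / 2 ^ psum a n :=
  .of_norm_bounded summable_geometric_two (norm_val_term_le ha)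

lemma abs_val_le_two (ha : ∀ i, 1 ≤ a i) : |val a| ≤ 2 :=
  tsum_of_norm_bounded hasSum_geometric_two (norm_val_term_le ha)

lemma val_eq_two_sub_val_tail_div (ha : ∀ i, 1 ≤ a i) :
    val a = (2 - val fun n => a (n + 1)) / 2 ^ a 0 := by
  have hterm : ∀ n, 2 * (-1 : ℝ) ^ (n + 1) / 2 ^ psum a (n + 1)
      = -(1 / 2 ^ a 0) * (2 * (-1 : ℝ) ^ n / 2 ^ psum (fun m => a (m + 1)) n) := fun n => by
    rw [psum_succ, pow_add, pow_succ]
    ring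
  rw [val, (summable_val_term ha).tsum_eq_zero_add, tsum_congr hterm, tsum_mul_left, val]
  simp only [psum, zero_add, Finset.range_one, Finset.sum_singleton, pow_zero]
  ring

end Series

section Delta0

variable {K : Set ℕ}

lemma Delta0_subset_Icc (hK : ∀ k ∈ K, 1 ≤ k) : Delta0 K ⊆ Set.Icc (-2) 2 := by
  rintro _ ⟨a, ha, rfl⟩
  exact abs_le.mp (abs_val_le_two fun i => hK _ (ha i))

lemma isBounded_Delta0 (hK : ∀ k ∈ K, 1 ≤ k) : Bornology.IsBounded (Delta0 K) :=
  (Metric.isBounded_Icc (-2 : ℝ) 2).subset (Delta0_subset_Icc hK)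

lemma exists_eq_two_sub_div_of_mem_Delta0 (hK : ∀ k ∈ K, 1 ≤ k) {y : ℝ} (hy : y ∈ Delta0 K) :
    ∃ k ∈ K, ∃ z ∈ Delta0 K, y = (2 - z) / 2 ^ k := by
  obtain ⟨a, ha, rfl⟩ := hy
  exact ⟨a 0, ha 0, _, ⟨_, fun i => ha (i + 1), rfl⟩,
    val_eq_two_sub_val_tail_div fun i => hK _ (ha i)⟩

lemma Delta0_nonempty (hK : K.Nonempty) : (Delta0 K).Nonempty :=
  let ⟨k, hk⟩ := hK
  ⟨_, fun _ => k, fun _ => hk, rfl⟩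

lemma sSup_Delta0_mul_le {m : ℕ} (hm : 0 < m) (hmK : ∀ k ∈ K, m ≤ k) (hK : K.Nonempty) :
    sSup (Delta0 K) * 2 ^ m ≤ 2 - sInf (Delta0 K) := by
  have hK1 : ∀ k ∈ K, 1 ≤ k := fun k hk => hm.trans_le (hmK k hk)
  have hIcc := Delta0_subset_Icc hK1
  have hne := Delta0_nonempty hK
  have hbdd : BddBelow (Delta0 K) := bddBelow_Icc.mono hIcc
  have hL : sInf (Delta0 K) ≤ 2 := (csInf_le hbdd hne.some_mem).trans (hIcc hne.some_mem).2
  rw [← le_div_iff₀ (by positivity)]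
  refine csSup_le hne fun y hy => ?_
  obtain ⟨k, hk, z, hz, rfl⟩ := exists_eq_two_sub_div_of_mem_Delta0 hK1 hy
  exact div_le_div₀ (by linarith) (by linarith [csInf_le hbdd hz]) (by positivity)
    (pow_le_pow_right₀ one_le_two (hmK k hk))

lemma two_sub_sSup_Delta0_le {M : ℕ} (hK1 : ∀ k ∈ K, 1 ≤ k) (hKM : ∀ k ∈ K, k ≤ M)
    (hK : K.Nonempty) : 2 - sSup (Delta0 K) ≤ sInf (Delta0 K) * 2 ^ M := by
  have hIcc := Delta0_subset_Icc hK1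
  have hne := Delta0_nonempty hK
  have hbdd : BddAbove (Delta0 K) := bddAbove_Icc.mono hIcc
  have hU : sSup (Delta0 K) ≤ 2 := csSup_le hne fun y hy => (hIcc hy).2
  rw [← div_le_iff₀ (by positivity)]
  refine le_csInf hne fun y hy => ?_
  obtain ⟨k, hk, z, hz, rfl⟩ := exists_eq_two_sub_div_of_mem_Delta0 hK1 hy
  exact div_le_div₀ (by linarith [(hIcc hz).2]) (by linarith [le_csSup hbdd hz])
    (by positivity) (pow_le_pow_right₀ one_le_two (hKM k hk))

lemma diam_Delta0_le {m M : ℕ} (hKmM : K ⊆ Set.Icc m M) (hm : 0 < m) (hK : K.Nonempty) :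
    Metric.diam (Delta0 K) ≤ 2 * ((2 : ℝ) ^ M - 2 ^ m) / (2 ^ (m + M) - 1) := by
  have hK1 : ∀ k ∈ K, 1 ≤ k := fun _ hk => hm.trans_le (hKmM hk).1
  have hupper := sSup_Delta0_mul_le hm (fun _ hk => (hKmM hk).1) hK
  have hlower := two_sub_sSup_Delta0_le hK1 (fun _ hk => (hKmM hk).2) hK
  have hmM : (1 : ℝ) < 2 ^ m * 2 ^ M := one_lt_mul_of_lt_of_le (one_lt_pow₀ one_lt_two hm.ne')
    (one_le_pow₀ one_le_two)
  rw [Real.diam_eq (isBounded_Delta0 hK1),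
    le_div_iff₀ (by rw [pow_add]; linarith), pow_add]
  linear_combination (2 ^ M + 1 : ℝ) * hupper + (2 ^ m + 1 : ℝ) * hlower

end Delta0

def alternating (k l n : ℕ) : ℕ := if Even n then k else l

lemma alternating_succ (k l n : ℕ) : alternating k l (n + 1) = alternating l k n := by
  by_cases h : Even n <;> simp [alternating, Nat.even_add_one, h]

lemma alternating_mem {K : Set ℕ} {k l : ℕ} (hk : k ∈ K) (hl : l ∈ K) (n : ℕ) :
    alternating k l n ∈ K := by
  unfold alternating
  split_ifs <;> assumption

lemma val_alternating_mul {k l : ℕ} (hk : 0 < k) (hl : 0 < l) :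
    val (alternating k l) * 2 ^ k = 2 - val (alternating l k) := by
  have ha : ∀ i, 1 ≤ alternating k l i := fun i => alternating_mem (K := Set.Ici 1) hk hl i
  rw [val_eq_two_sub_val_tail_div ha, funext (alternating_succ k l), alternating, if_pos Even.zero]
  field_simp

lemma val_alternating_sub {k l : ℕ} (hk : 0 < k) (hl : 0 < l) :
    val (alternating k l) - val (alternating l k) = 2 * ((2 : ℝ) ^ l - 2 ^ k) / (2 ^ (k + l) - 1) := by
  have h₁ := val_alternating_mul hk hl
  have h₂ := val_alternating_mul hl hk
  have hkl : (1 : ℝ) < 2 ^ (k + l) := one_lt_pow₀ one_lt_two (by omega)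
  rw [eq_div_iff (by linarith), pow_add]
  linear_combination (2 ^ l + 1 : ℝ) * h₁ - (2 ^ k + 1 : ℝ) * h₂

theorem diam_Delta0 (k1 k2 : ℕ) (hk1 : 0 < k1) (hk : k1 < k2) :
    Metric.diam (Delta0 {k1, k2}) =
      2 * ((2 : ℝ) ^ k2 - (2 : ℝ) ^ k1) / ((2 : ℝ) ^ (k1 + k2) - 1) := by
  have hK : ({k1, k2} : Set ℕ) ⊆ Set.Icc k1 k2 := by simp [Set.insert_subset_iff, hk.le]
  refine le_antisymm (diam_Delta0_le hK hk1 (Set.insert_nonempty _ _)) ?_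
  have hk1K : k1 ∈ ({k1, k2} : Set ℕ) := .inl rfl
  have hk2K : k2 ∈ ({k1, k2} : Set ℕ) := .inr rfl
  have hbdd := isBounded_Delta0 fun _ hk' => hk1.trans_le (hK hk').1
  rw [← val_alternating_sub hk1 (hk1.trans hk)]
  exact (le_abs_self _).trans (Metric.dist_le_diam_of_mem hbdd
    ⟨_, alternating_mem hk1K hk2K, rfl⟩ ⟨_, alternating_mem hk2K hk1K, rfl⟩)
end

section
/- The iterated function system {f_j(y) = 2/2^{k_j} − y/2^{k_j} : j = 1,...,S} on ℝ, where k1 < k2 < ... < kS are positive integers, satisfies the open set condition. -/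
open Filter Topology

lemma oscAux (i j : ℕ) (hij : i < j) :
    Disjoint ((fun y : ℝ => 2 / 2 ^ i - y / 2 ^ i) '' Set.Ioo 0 1)
      ((fun y : ℝ => 2 / 2 ^ j - y / 2 ^ j) '' Set.Ioo 0 1) := by
  rw [Set.disjoint_left]
  rintro z ⟨x, ⟨hx0, hx1⟩, rfl⟩ ⟨w, ⟨hw0, hw1⟩, hzw⟩
  simp only at hzw
  have hpi : (0:ℝ) < 2 ^ i := by positivity
  have hpj : (0:ℝ) < 2 ^ j := by positivity
  have key : (2 - w) * 2 ^ i = (2 - x) * 2 ^ j := by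
    field_simp at hzw
    nlinarith [hzw]
  have h2 : (2:ℝ) ^ (i + 1) ≤ 2 ^ j := by
    apply pow_le_pow_right₀ (by norm_num) hij
  have hL : (2 - w) * 2 ^ i < 2 ^ (i + 1) := by
    rw [pow_succ]; nlinarith
  have hR : (2:ℝ) ^ (i + 1) < (2 - x) * 2 ^ j := by
    nlinarith
  linarith

theorem openSetCondition (K : Finset ℕ) (hcard : 1 < K.card) (hpos : ∀ k ∈ K, 0 < k) :
    ∃ U : Set ℝ, U.Nonempty ∧ IsOpen U ∧
      (∀ k ∈ K, (fun y : ℝ => 2 / 2 ^ k - y / 2 ^ k) '' U ⊆ U) ∧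
      ∀ i ∈ K, ∀ j ∈ K, i ≠ j →
        Disjoint ((fun y : ℝ => 2 / 2 ^ i - y / 2 ^ i) '' U)
          ((fun y : ℝ => 2 / 2 ^ j - y / 2 ^ j) '' U) := by
  refine ⟨Set.Ioo 0 1, ⟨1/2, by norm_num⟩, isOpen_Ioo, ?_, ?_⟩
  · rintro k hk y ⟨x, ⟨hx0, hx1⟩, rfl⟩
    have hk1 : 1 ≤ k := hpos k hk
    have hp : (0:ℝ) < 2 ^ k := by positivity
    have h2 : (2:ℝ) ≤ 2 ^ k := by
      calc (2:ℝ) = 2 ^ 1 := by norm_num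
        _ ≤ 2 ^ k := pow_le_pow_right₀ (by norm_num) hk1
    simp only
    rw [← sub_div]
    constructor
    · apply div_pos (by linarith) hp
    · rw [div_lt_one hp]; linarith
  · intro i hi j hj hij
    rcases lt_or_gt_of_ne hij with h | h
    · exact oscAux i j h
    · exact (oscAux j i h).symm
end

section
/- The equation Σ_{k=1}^{9} (1/2^k)^α = 1 has a unique solution α ∈ (0,1), and this solution satisfies 0.998 < α < 0.999. -/
/-!
The map `α ↦ ∑_{k=1}^9 (2^(-k))^α` is continuous and strictly decreasing, so it takes the value
`1` at most once, and does so in `(0.998, 0.999)` as soon as it is `> 1` at `0.998` and `< 1` at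
`0.999`. Writing `t = 2^(-α)` the sum is `∑_{k=1}^9 t^k`, whose root `t ≈ 0.500493` lies between
`0.50035 > 2^(-0.999)` and `0.5006 < 2^(-0.998)`; raising to the 1000th power turns these two
estimates into inequalities between integers.
-/

open Finset Real

theorem StrictAnti.mem_Ioo_of_eq {α β : Type*} [LinearOrder α] [Preorder β] {f : α → β}
    (hf : StrictAnti f) {a b x : α} {c : β} (ha : c < f a) (hb : f b < c) (hx : f x = c) :
    x ∈ Set.Ioo a b := by
  subst hx
  exact ⟨hf.lt_iff_gt.mp ha, hf.lt_iff_gt.mp hb⟩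

section SumRpow

variable {ι : Type*} {s : Finset ι} {b : ι → ℝ}

theorem strictAnti_sum_rpow (hs : s.Nonempty) (hb : ∀ i ∈ s, 0 < b i ∧ b i < 1) :
    StrictAnti fun α : ℝ => ∑ i ∈ s, b i ^ α := fun _ _ hαβ =>
  sum_lt_sum_of_nonempty hs fun i hi => rpow_lt_rpow_of_exponent_gt (hb i hi).1 (hb i hi).2 hαβ

theorem continuous_sum_rpow (hb : ∀ i ∈ s, b i ≠ 0) :
    Continuous fun α : ℝ => ∑ i ∈ s, b i ^ α :=
  continuous_finsetSum _ fun i hi => continuous_const.rpow continuous_id fun _ => .inl (hb i hi)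

end SumRpow

theorem lt_rpow_div_iff {x y : ℝ} (hx : 0 ≤ x) (hy : 0 ≤ y) (m : ℕ) {n : ℕ} (hn : n ≠ 0) :
    y < x ^ ((m : ℝ) / n) ↔ y ^ n < x ^ m := by
  rw [div_eq_mul_inv, rpow_natCast_mul hx,
    lt_rpow_inv_iff_of_pos hy (by positivity) (by positivity), rpow_natCast]

theorem rpow_div_lt_iff {x y : ℝ} (hx : 0 ≤ x) (hy : 0 ≤ y) (m : ℕ) {n : ℕ} (hn : n ≠ 0) :
    x ^ ((m : ℝ) / n) < y ↔ x ^ m < y ^ n := by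
  rw [div_eq_mul_inv, rpow_natCast_mul hx,
    rpow_inv_lt_iff_of_pos (by positivity) hy (by positivity), rpow_natCast]

theorem sum_one_div_two_pow_rpow (s : Finset ℕ) (α : ℝ) :
    ∑ k ∈ s, ((1 : ℝ) / 2 ^ k) ^ α = ∑ k ∈ s, ((1 / 2 : ℝ) ^ α) ^ k := by
  simp_rw [rpow_pow_comm (by norm_num : (0 : ℝ) ≤ 1 / 2), one_div_pow]

theorem one_lt_sum_one_div_two_pow_rpow_998 :
    1 < ∑ k ∈ Icc 1 9, ((1 : ℝ) / 2 ^ k) ^ (0.998 : ℝ) := by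
  have ht : (5006 / 10000 : ℝ) < (1 / 2) ^ (0.998 : ℝ) := by
    rw [show (0.998 : ℝ) = (998 : ℕ) / (1000 : ℕ) by norm_num,
      lt_rpow_div_iff (by norm_num) (by norm_num) _ (by norm_num), div_pow, div_pow,
      div_lt_div_iff₀ (by positivity) (by positivity)]
    exact_mod_cast (by decide +kernel : 5006 ^ 1000 * 2 ^ 998 < 1 ^ 998 * 10000 ^ 1000)
  calc (1 : ℝ) < ∑ k ∈ Icc 1 9, (5006 / 10000 : ℝ) ^ k := by norm_num [sum_Icc_succ_top]
    _ ≤ ∑ k ∈ Icc 1 9, ((1 / 2 : ℝ) ^ (0.998 : ℝ)) ^ k :=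
      sum_le_sum fun k _ => pow_le_pow_left₀ (by norm_num) ht.le k
    _ = _ := (sum_one_div_two_pow_rpow _ _).symm

theorem sum_one_div_two_pow_rpow_999_lt_one :
    ∑ k ∈ Icc 1 9, ((1 : ℝ) / 2 ^ k) ^ (0.999 : ℝ) < 1 := by
  have ht : (1 / 2 : ℝ) ^ (0.999 : ℝ) < 50035 / 100000 := by
    rw [show (0.999 : ℝ) = (999 : ℕ) / (1000 : ℕ) by norm_num,
      rpow_div_lt_iff (by norm_num) (by norm_num) _ (by norm_num), div_pow, div_pow,
      div_lt_div_iff₀ (by positivity) (by positivity)]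
    exact_mod_cast (by decide +kernel : 1 ^ 999 * 100000 ^ 1000 < 50035 ^ 1000 * 2 ^ 999)
  calc ∑ k ∈ Icc 1 9, ((1 : ℝ) / 2 ^ k) ^ (0.999 : ℝ)
      = ∑ k ∈ Icc 1 9, ((1 / 2 : ℝ) ^ (0.999 : ℝ)) ^ k := sum_one_div_two_pow_rpow _ _
    _ ≤ ∑ k ∈ Icc 1 9, (50035 / 100000 : ℝ) ^ k :=
      sum_le_sum fun k _ => pow_le_pow_left₀ (by positivity) ht.le k
    _ < 1 := by norm_num [sum_Icc_succ_top]

theorem moran_equation_E9 :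
    (∃! α : ℝ, α ∈ Set.Ioo (0 : ℝ) 1 ∧ ∑ k ∈ Finset.Icc 1 9, ((1 : ℝ) / 2 ^ k) ^ α = 1) ∧
    ∀ α : ℝ, α ∈ Set.Ioo (0 : ℝ) 1 → ∑ k ∈ Finset.Icc 1 9, ((1 : ℝ) / 2 ^ k) ^ α = 1 →
      0.998 < α ∧ α < 0.999 := by
  set f : ℝ → ℝ := fun α => ∑ k ∈ Icc 1 9, ((1 : ℝ) / 2 ^ k) ^ α
  have hbase : ∀ k ∈ Icc 1 9, 0 < (1 : ℝ) / 2 ^ k ∧ (1 : ℝ) / 2 ^ k < 1 := fun k hk =>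
    ⟨by positivity, (div_lt_one (by positivity)).mpr
      (one_lt_pow₀ one_lt_two (Nat.one_le_iff_ne_zero.mp (mem_Icc.mp hk).1))⟩
  have hanti : StrictAnti f := strictAnti_sum_rpow ⟨1, by simp⟩ hbase
  have hroot_mem : ∀ α, f α = 1 → α ∈ Set.Ioo 0.998 0.999 := fun _ =>
    hanti.mem_Ioo_of_eq one_lt_sum_one_div_two_pow_rpow_998 sum_one_div_two_pow_rpow_999_lt_one
  obtain ⟨α, -, hα⟩ := intermediate_value_Ioo' (by norm_num : (0.998 : ℝ) ≤ 0.999)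
    (continuous_sum_rpow fun k hk => (hbase k hk).1.ne').continuousOn
    ⟨sum_one_div_two_pow_rpow_999_lt_one, one_lt_sum_one_div_two_pow_rpow_998⟩
  obtain ⟨h998, h999⟩ := hroot_mem α hα
  refine ⟨⟨α, ⟨⟨by linarith, by linarith⟩, hα⟩, fun β hβ => hanti.injective (hβ.2.trans hα.symm)⟩,
    fun β _ hβ => hroot_mem β hβ⟩
end

section
/- For positive integers k1 < k2, the images of the convex hull I0 = [inf Δ0, sup Δ0] under f1(y) = 2/2^{k1} − y/2^{k1} and f2(y) = 2/2^{k2} − y/2^{k2} are disjoint: max f2(I0) < min f1(I0). -/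
theorem images_disjoint (k1 k2 : ℕ) (hk1 : 0 < k1) (hk : k1 < k2) :
    ∀ y ∈ Set.Icc (2 * ((2 : ℝ) ^ k1 - 1) / ((2 : ℝ) ^ (k1 + k2) - 1))
        (2 * ((2 : ℝ) ^ k2 - 1) / ((2 : ℝ) ^ (k1 + k2) - 1)),
      ∀ z ∈ Set.Icc (2 * ((2 : ℝ) ^ k1 - 1) / ((2 : ℝ) ^ (k1 + k2) - 1))
        (2 * ((2 : ℝ) ^ k2 - 1) / ((2 : ℝ) ^ (k1 + k2) - 1)),
      2 / (2 : ℝ) ^ k2 - y / 2 ^ k2 < 2 / (2 : ℝ) ^ k1 - z / 2 ^ k1 := by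
  intro y hy z hz
  have hA : (2:ℝ) ≤ 2 ^ k1 := by
    calc (2:ℝ) = 2 ^ 1 := by norm_num
    _ ≤ 2 ^ k1 := pow_le_pow_right₀ (by norm_num) hk1
  have hB : 2 * (2:ℝ) ^ k1 ≤ 2 ^ k2 := by
    have h : (2:ℝ) ^ (k1 + 1) ≤ 2 ^ k2 := pow_le_pow_right₀ (by norm_num) hk
    calc 2 * (2:ℝ) ^ k1 = 2 ^ (k1 + 1) := by ring
    _ ≤ 2 ^ k2 := h
  set A : ℝ := 2 ^ k1 with hAdef
  set B : ℝ := 2 ^ k2 with hBdef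
  have hAB : (2:ℝ) ^ (k1 + k2) = A * B := pow_add 2 k1 k2
  rw [hAB] at hy hz
  have hA0 : (0:ℝ) < A := by linarith
  have hB0 : (0:ℝ) < B := by linarith
  have hD : (0:ℝ) < A * B - 1 := by nlinarith
  obtain ⟨hy1, hy2⟩ := hy
  obtain ⟨hz1, hz2⟩ := hz
  have h1 : 2 * (A - 1) ≤ y * (A * B - 1) := (div_le_iff₀ hD).mp hy1
  have h2 : z * (A * B - 1) ≤ 2 * (B - 1) := (le_div_iff₀ hD).mp hz2
  have key : (2 - y) * A < (2 - z) * B := by nlinarith [mul_pos hA0 hB0, sq_nonneg (A - B), mul_pos (mul_pos hA0 hA0) hB0]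
  have : (2 - y) / B < (2 - z) / A := (div_lt_div_iff₀ hB0 hA0).mpr key
  calc 2 / B - y / B = (2 - y) / B := by ring
  _ < (2 - z) / A := this
  _ = 2 / A - z / A := by ring
end
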